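/- arXiv:1802.02521 — 4 statements merged into one kernel-verified Lean document; each statement's English description precedes it below -/
import Mathlib

section
/- Let A be a square matrix with integer entries all of whose complex eigenvalues have modulus at most 1. Then every nonzero eigenvalue of A is a root of unity. -/
/-!
The characteristic polynomial of `A` is a monic integer polynomial whose complex roots all lie in
the closed unit disk, so its Mahler measure is `1`. By Kronecker's theorem, every nonzero root of
an integer polynomial of Mahler measure `1` is a root of unity.
-/

open Polynomial

theorem Polynomial.Monic.mahlerMeasure_eq_one {p : ℂ[X]} (hp : p.Monic)
    (hroots : ∀ z ∈ p.roots, ‖z‖ ≤ 1) : p.mahlerMeasure = 1 := by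
  rw [mahlerMeasure_eq_leadingCoeff_mul_prod_roots, hp.leadingCoeff, norm_one, one_mul]
  refine Multiset.prod_eq_one fun x hx ↦ ?_
  obtain ⟨z, hz, rfl⟩ := Multiset.mem_map.mp hx
  exact max_eq_left (hroots z hz)

theorem Polynomial.Monic.pow_eq_one_of_norm_aroots_le_one {p : ℤ[X]} (hp : p.Monic)
    (hroots : ∀ z ∈ p.aroots ℂ, ‖z‖ ≤ 1) {z : ℂ} (hz₀ : z ≠ 0) (hz : z ∈ p.aroots ℂ) :
    ∃ k, 0 < k ∧ z ^ k = 1 :=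
  pow_eq_one_of_mahlerMeasure_eq_one ((hp.map _).mahlerMeasure_eq_one hroots) hz₀ hz

theorem Matrix.mem_aroots_charpoly_iff_isRoot_charpoly_map {ι S : Type*} [Fintype ι]
    [DecidableEq ι] [CommRing S] [IsDomain S] (A : Matrix ι ι ℤ) (μ : S) :
    μ ∈ A.charpoly.aroots S ↔ (A.map (Int.cast : ℤ → S)).charpoly.IsRoot μ := by
  rw [aroots, algebraMap_int_eq, ← charpoly_map, mem_roots (charpoly_monic _).ne_zero]
  rfl

/-- An integer matrix all of whose complex eigenvalues have modulus at most `1` has all its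
nonzero eigenvalues equal to roots of unity. -/
theorem stmt_9 {n : ℕ} (A : Matrix (Fin n) (Fin n) ℤ)
    (hbound : ∀ μ : ℂ, (Matrix.charpoly (A.map (Int.cast : ℤ → ℂ))).IsRoot μ →
      ‖μ‖ ≤ 1) :
    ∀ μ : ℂ, (Matrix.charpoly (A.map (Int.cast : ℤ → ℂ))).IsRoot μ → μ ≠ 0 →
      ∃ k : ℕ, 0 < k ∧ μ ^ k = 1 := by
  intro μ hμ hμ₀
  simp only [← A.mem_aroots_charpoly_iff_isRoot_charpoly_map] at hbound hμ
  exact A.charpoly_monic.pow_eq_one_of_norm_aroots_le_one hbound hμ₀ hμ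
end

section
/- Let A be a square matrix with real entries. Then trace(A^l) ≥ 0 for infinitely many positive integers l. -/
/-!
Over `ℂ`, `trace (A ^ l) = ∑ μ ^ l` with `μ` running over the eigenvalues of `A` with
algebraic multiplicity: split the space into generalized eigenspaces, on each of which
`A - μ` is nilpotent. Rescale so that the largest eigenvalue modulus is `1`. By compactness
of the torus, the unimodular eigenvalues satisfy `‖μ ^ l - 1‖ < 1/2` simultaneously for
infinitely many `l`, making the real part of their contribution at least `1/2`, while the
powers of the eigenvalues of modulus `< 1` tend to `0`.
-/

open Filter Finset Module

theorem Commute.isNilpotent_pow_sub_pow {R : Type*} [Ring R] {x y : R} (h : Commute x y)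
    (hxy : IsNilpotent (x - y)) (n : ℕ) : IsNilpotent (x ^ n - y ^ n) := by
  rw [← h.mul_geom_sum₂]
  refine Commute.isNilpotent_mul_right (Commute.sum_right _ _ _ fun i _ => ?_) hxy
  exact (((Commute.refl x).sub_left h.symm).pow_right i).mul_right
    ((h.sub_left (Commute.refl y)).pow_right _)

namespace Module.End

variable {K V : Type*} [Field K] [AddCommGroup V] [Module K V] [FiniteDimensional K V]

theorem trace_restrict_pow_maxGenEigenspace (f : End K V) (μ : K) (l : ℕ)
    (h : Set.MapsTo (f ^ l) (f.maxGenEigenspace μ) (f.maxGenEigenspace μ)) :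
    LinearMap.trace K _ ((f ^ l).restrict h) = finrank K (f.maxGenEigenspace μ) * μ ^ l := by
  have hf : Set.MapsTo f (f.maxGenEigenspace μ) (f.maxGenEigenspace μ) :=
    f.mapsTo_maxGenEigenspace_of_comm rfl μ
  set g := f.restrict hf
  have hnil : IsNilpotent (g - algebraMap K _ μ) := by
    convert f.isNilpotent_restrict_maxGenEigenspace_sub_algebraMap μ using 1
    ext; rfl
  have hpow := (Algebra.commute_algebraMap_right μ g).isNilpotent_pow_sub_pow hnil l
  rw [← pow_restrict l hf h, ← sub_add_cancel (g ^ l) (algebraMap K _ μ ^ l), map_add,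
    (LinearMap.isNilpotent_trace_of_isNilpotent hpow).eq_zero, ← map_pow,
    Module.algebraMap_end_eq_smul_id, map_smul, LinearMap.trace_id]
  simp [mul_comm]

theorem finrank_maxGenEigenspace_eq_count_roots [DecidableEq K] (f : End K V) (μ : K) :
    finrank K (f.maxGenEigenspace μ) = f.charpoly.roots.count μ := by
  rw [LinearMap.finrank_maxGenEigenspace_eq, Polynomial.count_roots]

theorem trace_pow_eq_sum_roots_charpoly_pow [IsAlgClosed K] (f : End K V) (l : ℕ) :
    LinearMap.trace K V (f ^ l) = (f.charpoly.roots.map (· ^ l)).sum := by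
  classical
  have hfin : {μ | f.maxGenEigenspace μ ≠ ⊥}.Finite :=
    WellFoundedGT.finite_ne_bot_of_iSupIndep f.independent_maxGenEigenspace
  have hint := DirectSum.isInternal_submodule_of_iSupIndep_of_iSup_eq_top
    f.independent_maxGenEigenspace f.iSup_maxGenEigenspace_eq_top
  have hmaps (μ : K) : Set.MapsTo (f ^ l) (f.maxGenEigenspace μ) (f.maxGenEigenspace μ) :=
    f.mapsTo_maxGenEigenspace_of_comm (Commute.pow_right rfl l) μ
  have hroots : hfin.toFinset = f.charpoly.roots.toFinset := by
    ext μ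
    rw [Set.Finite.mem_toFinset, Set.mem_ofPred_eq, Multiset.mem_toFinset,
      ← Multiset.count_ne_zero, ← finrank_maxGenEigenspace_eq_count_roots]
    exact Submodule.finrank_eq_zero.not.symm
  rw [LinearMap.trace_eq_sum_trace_restrict' hint hfin hmaps, Finset.sum_multiset_map_count, hroots]
  refine Finset.sum_congr rfl fun μ _ => ?_
  rw [trace_restrict_pow_maxGenEigenspace, finrank_maxGenEigenspace_eq_count_roots, nsmul_eq_mul]

end Module.End

theorem Matrix.trace_pow_eq_sum_roots_charpoly_pow {ι K : Type*} [Fintype ι] [DecidableEq ι]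
    [Field K] [IsAlgClosed K] (M : Matrix ι ι K) (l : ℕ) :
    (M ^ l).trace = (M.charpoly.roots.map (· ^ l)).sum := by
  rw [← Matrix.trace_toLin'_eq, Matrix.toLin'_pow, Module.End.trace_pow_eq_sum_roots_charpoly_pow,
    Matrix.charpoly_toLin']

namespace Complex

theorem infinite_setOf_forall_norm_pow_sub_one_lt {ι : Type*} [Fintype ι] {u : ι → ℂ}
    (hu : ∀ i, ‖u i‖ = 1) {ε : ℝ} (hε : 0 < ε) :
    {l : ℕ | 0 < l ∧ ∀ i, ‖u i ^ l - 1‖ < ε}.Infinite := by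
  set x : ℕ → ι → ℂ := fun l i => u i ^ l
  have hx (l : ℕ) : x l ∈ Metric.closedBall 0 1 := by
    simp [x, pi_norm_le_iff_of_nonneg, hu]
  obtain ⟨_, -, φ, hφ, hlim⟩ := (isCompact_closedBall (0 : ι → ℂ) 1).tendsto_subseq hx
  obtain ⟨N, hN⟩ := Metric.cauchySeq_iff'.mp hlim.cauchySeq ε hε
  refine Set.infinite_of_forall_exists_gt fun M => ?_
  set a := φ N
  set b := φ (a + M + 1)
  have hab : a + M < b := Nat.lt_of_lt_of_le (by omega) hφ.le_apply
  refine ⟨b - a, ⟨by omega, fun i => ?_⟩, by omega⟩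
  have hNa : N ≤ a := hφ.le_apply
  have hclose : ‖x b - x a‖ < ε := dist_eq_norm (x b) _ ▸ hN (a + M + 1) (by omega)
  have hpow : u i ^ b = u i ^ (b - a) * u i ^ a := by
    rw [← pow_add, Nat.sub_add_cancel (by omega)]
  calc ‖u i ^ (b - a) - 1‖ = ‖u i ^ b - u i ^ a‖ := by
        rw [hpow, ← sub_one_mul, norm_mul, norm_pow, hu, one_pow, mul_one]
    _ ≤ ‖x b - x a‖ := norm_le_pi_norm (x b - x a) i
    _ < ε := hclose

theorem infinite_setOf_re_sum_pow_nonneg_of_norm_le_one {ι : Type*} [Fintype ι] {w : ι → ℂ}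
    (hw : ∀ i, ‖w i‖ ≤ 1) {m : ι} (hm : ‖w m‖ = 1) :
    {l : ℕ | 0 < l ∧ 0 ≤ (∑ i, w i ^ l).re}.Infinite := by
  have hrec := infinite_setOf_forall_norm_pow_sub_one_lt
    (u := fun i : {i // ‖w i‖ = 1} => w i) (fun i => i.2) one_half_pos
  have htail : Tendsto (fun l => ∑ i with ‖w i‖ ≠ 1, w i ^ l) atTop (nhds 0) := by
    simpa using tendsto_finsetSum _ fun i hi =>
      tendsto_pow_atTop_nhds_zero_of_norm_lt_one ((hw i).lt_of_ne (mem_filter.mp hi).2)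
  obtain ⟨L, hL⟩ := Metric.tendsto_atTop.mp htail (1 / 2) one_half_pos
  refine (hrec.sdiff (Set.finite_Iio L)).mono ?_
  rintro l ⟨⟨hl, hclose⟩, hlL⟩
  refine ⟨hl, ?_⟩
  have hunit (i : ι) (hi : ‖w i‖ = 1) : 1 / 2 < (w i ^ l).re := by
    have hre := neg_le_of_abs_le (abs_re_le_norm (w i ^ l - 1))
    rw [sub_re, one_re] at hre
    linarith [hclose ⟨i, hi⟩]
  have hmain : 1 / 2 ≤ ∑ i with ‖w i‖ = 1, (w i ^ l).re :=
    (hunit m hm).le.trans <| single_le_sum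
      (fun i hi => (one_half_pos.trans (hunit i (mem_filter.mp hi).2)).le)
      (mem_filter.mpr ⟨mem_univ m, hm⟩)
  have htail_re : -(1 / 2) < (∑ i with ‖w i‖ ≠ 1, w i ^ l).re := by
    have hsmall := hL l (by simpa using hlL)
    rw [dist_zero_right] at hsmall
    linarith [neg_le_of_abs_le (abs_re_le_norm (∑ i with ‖w i‖ ≠ 1, w i ^ l))]
  rw [← sum_filter_add_sum_filter_not univ (fun i => ‖w i‖ = 1), add_re, re_sum]
  linarith

theorem infinite_setOf_re_sum_pow_nonneg {ι : Type*} [Fintype ι] (z : ι → ℂ) :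
    {l : ℕ | 0 < l ∧ 0 ≤ (∑ i, z i ^ l).re}.Infinite := by
  by_cases hz : ∀ i, z i = 0
  · refine (Set.Ioi_infinite 0).mono fun l hl => ⟨hl, ?_⟩
    simp [hz, zero_pow (Nat.pos_iff_ne_zero.mp hl)]
  obtain ⟨i₀, hi₀⟩ := not_forall.mp hz
  have : Nonempty ι := ⟨i₀⟩
  obtain ⟨m, hm⟩ := Finite.exists_max fun i => ‖z i‖
  set ρ := ‖z m‖
  have hρ : 0 < ρ := (norm_pos_iff.mpr hi₀).trans_le (hm i₀)
  have hnorm (i : ι) : ‖z i / ρ‖ = ‖z i‖ / ρ := by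
    rw [norm_div, norm_real, Real.norm_of_nonneg hρ.le]
  refine (infinite_setOf_re_sum_pow_nonneg_of_norm_le_one (w := fun i => z i / ρ) (m := m)
    (fun i => (hnorm i).trans_le (div_le_one_of_le₀ (hm i) hρ.le))
    ((hnorm m).trans (div_self hρ.ne'))).mono ?_
  rintro l ⟨hl, hre⟩
  refine ⟨hl, ?_⟩
  have hscale : ∑ i, z i ^ l = (ρ ^ l : ℝ) * ∑ i, (z i / ρ) ^ l := by
    rw [mul_sum]
    refine sum_congr rfl fun i _ => ?_
    rw [div_pow, ofReal_pow, mul_div_cancel₀ _ (pow_ne_zero _ (ofReal_ne_zero.mpr hρ.ne'))]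
  rw [hscale, re_ofReal_mul]
  exact mul_nonneg (pow_nonneg hρ.le l) hre

end Complex

/-- For any real square matrix `A`, the trace of `A^l` is nonnegative for infinitely many
positive integers `l`. -/
theorem stmt_10 {n : ℕ} (A : Matrix (Fin n) (Fin n) ℝ) :
    {l : ℕ | 0 < l ∧ 0 ≤ Matrix.trace (A ^ l)}.Infinite := by
  set s := (A.map Complex.ofReal).charpoly.roots
  refine (Complex.infinite_setOf_re_sum_pow_nonneg fun μ : s => (μ : ℂ)).mono ?_
  rintro l ⟨hl, hre⟩
  refine ⟨hl, ?_⟩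
  have htrace : ((A ^ l).trace : ℂ) = ∑ μ : s, (μ : ℂ) ^ l := calc
    ((A ^ l).trace : ℂ) = (A.map Complex.ofReal ^ l).trace :=
      A.map_pow Complex.ofRealHom l ▸ AddMonoidHom.map_trace Complex.ofRealHom (A ^ l)
    _ = (s.map (· ^ l)).sum := Matrix.trace_pow_eq_sum_roots_charpoly_pow _ l
    _ = ∑ μ : s, (μ : ℂ) ^ l := by
      rw [Finset.sum_eq_multiset_sum, Multiset.map_univ s (· ^ l)]
  rwa [← htrace, Complex.ofReal_re] at hre
end

section
/- Let φ : V → V be an endomorphism of a vector space over a field K (not assumed finite-dimensional), and form the direct limit V_∞ of the constant direct system V → V → V → … with all bonding maps φ, with canonical map π : V → V_∞. If V is finite dimensional and W := im φ^m is the stabilized image, then π restricted to W is an isomorphism of W onto V_∞, and it conjugates φ|_W with the endomorphism φ_∞ of V_∞ induced by φ. -/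
/-
Since `φ` maps `W = im φ^m` onto `im φ^(m+1) = W`, finite dimensionality makes `φ|_W`
bijective. A class `[x]_j` of `V_∞` vanishes iff some `φ^k` kills `x`, so `π` is injective
on `W`; and `[x]_j = [φ^m x]_(j+m) = π w` for the `w ∈ W` with `φ^(j+m) w = φ^m x`, so `π`
maps `W` onto `V_∞`.
-/

noncomputable section

variable {K V : Type*} [Field K] [AddCommGroup V] [Module K V]

/-- The constant direct system `V → V → V → …` with all bonding maps equal to `φ`:
the bonding map from stage `i` to stage `j` is `φ^(j−i)`. -/
def constSys (φ : V →ₗ[K] V) : ∀ i j : ℕ, i ≤ j → V →ₗ[K] V :=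
  fun i j _ => φ ^ (j - i)

instance constSys_directedSystem (φ : V →ₗ[K] V) :
    DirectedSystem (fun _ : ℕ => V) (fun i j h => constSys φ i j h) where
  map_self := by
    intro i x
    simp [constSys]
  map_map := by
    intro k j i hij hjk x
    simp only [constSys, ← Module.End.mul_apply, ← pow_add]
    congr 2
    omega

/-- The direct limit `V_∞` of the constant system `V → V → V → …` with bonding maps `φ`. -/
def constLimit (φ : V →ₗ[K] V) : Type _ :=
  Module.DirectLimit (fun _ : ℕ => V) (constSys φ)

instance (φ : V →ₗ[K] V) : AddCommGroup (constLimit φ) :=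
  inferInstanceAs (AddCommGroup (Module.DirectLimit (fun _ : ℕ => V) (constSys φ)))

instance (φ : V →ₗ[K] V) : Module K (constLimit φ) :=
  inferInstanceAs (Module K (Module.DirectLimit (fun _ : ℕ => V) (constSys φ)))

/-- The canonical projection `π : V → V_∞` from the first term of the sequence. -/
def constLimitPi (φ : V →ₗ[K] V) : V →ₗ[K] constLimit φ :=
  Module.DirectLimit.of K ℕ (fun _ : ℕ => V) (constSys φ) 0

/-- The endomorphism `φ_∞` of `V_∞` induced by the vertical maps `φ` between two copies
of the constant direct system. -/
def constLimitMap (φ : V →ₗ[K] V) : constLimit φ →ₗ[K] constLimit φ :=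
  Module.DirectLimit.map (f := constSys φ) (f' := constSys φ) (fun _ => φ)
    (by
      intro i j h
      ext x
      simp only [LinearMap.comp_apply, constSys, ← Module.End.mul_apply]
      rw [← pow_succ, ← pow_succ'])

namespace LinearMap

variable {R M : Type*} [Semiring R] [AddCommMonoid M] [Module R M]

theorem map_range_pow_eq_of_range_pow_eq {f : M →ₗ[R] M} {m : ℕ}
    (hm : range (f ^ m) = range (f ^ (m + 1))) : (range (f ^ m)).map f = range (f ^ m) := by
  rw [← range_comp, ← Module.End.mul_eq_comp, ← pow_succ', hm]

theorem bijective_restrict_of_map_eq {f : V →ₗ[K] V} {W : Submodule K V}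
    [FiniteDimensional K W] (hW : W.map f = W) :
    Function.Bijective (f.restrict fun _ hw => hW.le (Submodule.mem_map_of_mem hw)) := by
  have hsurj :
      Function.Surjective (f.restrict fun _ hw => hW.le (Submodule.mem_map_of_mem hw)) := by
    rintro ⟨w, hw⟩
    obtain ⟨v, hv, rfl⟩ := Submodule.mem_map.1 (hW.symm ▸ hw)
    exact ⟨⟨v, hv⟩, rfl⟩
  exact ⟨injective_iff_surjective.2 hsurj, hsurj⟩

end LinearMap

section ConstLimit

variable {φ : V →ₗ[K] V}

theorem constLimit_of_pow_apply (k i : ℕ) (x : V) :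
    Module.DirectLimit.of K ℕ (fun _ => V) (constSys φ) (k + i) ((φ ^ k) x) =
      Module.DirectLimit.of K ℕ (fun _ => V) (constSys φ) i x := by
  rw [← Module.DirectLimit.of_f (hij := Nat.le_add_left i k), constSys, Nat.add_sub_cancel]

theorem constLimitPi_eq_of_pow_apply (k : ℕ) (x : V) :
    Module.DirectLimit.of K ℕ (fun _ => V) (constSys φ) k ((φ ^ k) x) = constLimitPi φ x :=
  constLimit_of_pow_apply k 0 x

theorem constLimitPi_eq_zero_iff {x : V} : constLimitPi φ x = 0 ↔ ∃ j, (φ ^ j) x = 0 := by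
  constructor
  · intro hx
    obtain ⟨j, _, hj⟩ := Module.DirectLimit.of.zero_exact hx
    exact ⟨j, hj⟩
  · rintro ⟨j, hj⟩
    rw [← constLimitPi_eq_of_pow_apply j, hj]
    exact map_zero _

theorem constLimitMap_constLimitPi (x : V) :
    constLimitMap φ (constLimitPi φ x) = constLimitPi φ (φ x) :=
  Module.DirectLimit.map_apply_of _ _ _

section Restrict

variable {W : Submodule K V} (hW : ∀ w ∈ W, φ w ∈ W)
include hW

theorem injective_constLimitPi_comp_subtype (hinj : Function.Injective (φ.restrict hW)) :
    Function.Injective fun w : W => constLimitPi φ (w : V) := by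
  refine (injective_iff_map_eq_zero (constLimitPi φ ∘ₗ W.subtype)).2 fun w hw => ?_
  obtain ⟨j, hj⟩ := constLimitPi_eq_zero_iff.1 hw
  have hinj_pow : Function.Injective ((φ.restrict hW) ^ j) := by
    rw [Module.End.coe_pow]
    exact hinj.iterate j
  refine (injective_iff_map_eq_zero _).1 hinj_pow w ?_
  rw [Module.End.pow_restrict]
  exact Subtype.ext hj

theorem surjective_constLimitPi_comp_subtype (hsurj : Function.Surjective (φ.restrict hW))
    (habs : ∀ x, ∃ k, (φ ^ k) x ∈ W) :
    Function.Surjective fun w : W => constLimitPi φ (w : V) := by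
  intro z
  obtain ⟨j, x, rfl⟩ := Module.DirectLimit.exists_of z
  obtain ⟨k, hk⟩ := habs x
  have hsurj_pow : Function.Surjective ((φ.restrict hW) ^ (k + j)) := by
    rw [Module.End.coe_pow]
    exact hsurj.iterate (k + j)
  obtain ⟨w, hw⟩ := hsurj_pow ⟨_, hk⟩
  rw [Module.End.pow_restrict] at hw
  have hw' : (φ ^ (k + j)) w = (φ ^ k) x := congrArg Subtype.val hw
  refine ⟨w, ?_⟩
  show constLimitPi φ (w : V) = _
  rw [← constLimitPi_eq_of_pow_apply (k + j), hw']
  exact constLimit_of_pow_apply k j x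

end Restrict

end ConstLimit

/-- Leray reduction: if `V` is finite dimensional and `W = im φ^m` is the stabilized image,
then the canonical projection `π : V → V_∞` restricts to an isomorphism of `W` onto `V_∞`
which conjugates `φ|_W` with the induced endomorphism `φ_∞`. -/
theorem stmt_16 [FiniteDimensional K V] (φ : V →ₗ[K] V) (m : ℕ)
    (hm : LinearMap.range (φ ^ m) = LinearMap.range (φ ^ (m + 1))) :
    Function.Bijective
        (fun x : LinearMap.range (φ ^ m) => constLimitPi φ (x : V)) ∧
      ∀ x : LinearMap.range (φ ^ m),
        constLimitMap φ (constLimitPi φ (x : V)) = constLimitPi φ (φ (x : V)) := by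
  have hmap := LinearMap.map_range_pow_eq_of_range_pow_eq hm
  have hW : ∀ w ∈ LinearMap.range (φ ^ m), φ w ∈ LinearMap.range (φ ^ m) :=
    fun _ hw => hmap.le (Submodule.mem_map_of_mem hw)
  have hbij : Function.Bijective (φ.restrict hW) := LinearMap.bijective_restrict_of_map_eq hmap
  refine ⟨⟨?_, ?_⟩, fun x => constLimitMap_constLimitPi (x : V)⟩
  · exact injective_constLimitPi_comp_subtype hW hbij.1
  · exact surjective_constLimitPi_comp_subtype hW hbij.2
      fun x => ⟨m, LinearMap.mem_range_self _ x⟩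

end
end

section
/- Let g : Z → Z be a continuous map of a topological space having a point a as a global asymptotically stable attractor (every point's forward orbit eventually enters, and stays in, any positively-invariant neighbourhood of a, and such neighbourhoods form a basis at a). Then for every q ≥ 0, the diagonal of Z^{q+1} has a neighbourhood basis consisting of sets positively invariant under the product map g × ⋯ × g (q+1 factors). -/
/-- If `a` is a globally attracting fixed point of a continuous map `g : Z → Z` with a
neighbourhood basis of positively invariant sets, then for every `q` the diagonal of
`Z^{q+1}` has a neighbourhood basis of sets positively invariant under `g × ⋯ × g`. -/
theorem stmt_18 {Z : Type*} [TopologicalSpace Z] (g : Z → Z) (hg : Continuous g) (a : Z)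
    (hbasis : ∀ U ∈ nhds a, ∃ P ∈ nhds a, P ⊆ U ∧ Set.MapsTo g P P)
    (hattract : ∀ z : Z, ∀ U ∈ nhds a, ∃ n₀ : ℕ, ∀ n ≥ n₀, g^[n] z ∈ U)
    (q : ℕ) :
    ∀ U ∈ nhdsSet (Set.range fun z : Z => fun _ : Fin (q + 1) => z),
      ∃ V ∈ nhdsSet (Set.range fun z : Z => fun _ : Fin (q + 1) => z),
        V ⊆ U ∧ Set.MapsTo (fun x : Fin (q + 1) → Z => g ∘ x) V V := by
  intro U hU
  set G : (Fin (q + 1) → Z) → (Fin (q + 1) → Z) := fun x => g ∘ x with hG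
  have hGcont : Continuous G := continuous_pi fun i => hg.comp (continuous_apply i)
  have hiter : ∀ (n : ℕ) (x : Fin (q + 1) → Z), G^[n] x = fun i => g^[n] (x i) := by
    intro n
    induction n with
    | zero => intro x; simp
    | succ n ih =>
      intro x
      rw [Function.iterate_succ_apply', ih]
      funext i
      simp [hG, Function.iterate_succ_apply']
  -- every diagonal point is in the interior of U
  have hdiag : ∀ z : Z, (fun _ : Fin (q + 1) => z) ∈ interior U := fun z =>
    subset_interior_iff_mem_nhdsSet.mpr hU ⟨z, rfl⟩
  -- U is a nhds of the diagonal point at a; extract a box neighbourhood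
  have hUa : U ∈ nhds (fun _ : Fin (q + 1) => a) := by
    exact mem_interior_iff_mem_nhds.mp (hdiag a)
  rw [nhds_pi, Filter.mem_pi] at hUa
  obtain ⟨I, _, t, ht, htU⟩ := hUa
  have hU' : (⋂ i, t i) ∈ nhds a := by
    exact (Filter.iInter_mem).mpr ht
  obtain ⟨P, hPnhds, hPsub, hPinv⟩ := hbasis _ hU'
  have hPU : ∀ x : Fin (q + 1) → Z, (∀ i, x i ∈ P) → x ∈ U := by
    intro x hx
    apply htU
    intro i _
    exact Set.mem_iInter.mp (hPsub (hx i)) i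
  -- the candidate set
  refine ⟨{x | ∀ n : ℕ, G^[n] x ∈ U}, ?_, ?_, ?_⟩
  · rw [mem_nhdsSet_iff_forall]
    rintro _ ⟨z, rfl⟩
    obtain ⟨n₀, hn₀⟩ := hattract z (interior P) (interior_mem_nhds.mpr hPnhds)
    set W : Set (Fin (q + 1) → Z) :=
      (⋂ n ∈ Finset.range n₀, G^[n] ⁻¹' interior U) ∩
        G^[n₀] ⁻¹' Set.univ.pi (fun _ => interior P) with hW
    have hWopen : IsOpen W := by
      apply IsOpen.inter
      · exact isOpen_biInter_finset fun n _ =>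
          isOpen_interior.preimage (hGcont.iterate n)
      · exact (isOpen_set_pi Set.finite_univ fun _ _ => isOpen_interior).preimage
          (hGcont.iterate n₀)
    have hzW : (fun _ : Fin (q + 1) => z) ∈ W := by
      constructor
      · simp only [Set.mem_iInter]
        intro n _
        rw [Set.mem_preimage, hiter]
        exact hdiag (g^[n] z)
      · rw [Set.mem_preimage, hiter]
        intro i _
        exact hn₀ n₀ le_rfl
    have hWV : W ⊆ {x | ∀ n : ℕ, G^[n] x ∈ U} := by
      rintro x ⟨hx1, hx2⟩ n
      rcases lt_or_ge n n₀ with h | h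
      · have := Set.mem_iInter.mp hx1 n
        have := Set.mem_iInter.mp this (Finset.mem_range.mpr h)
        exact interior_subset this
      · obtain ⟨k, rfl⟩ := Nat.exists_eq_add_of_le h
        rw [hiter]
        apply hPU
        intro i
        have hxi : g^[n₀] (x i) ∈ P := by
          rw [Set.mem_preimage] at hx2
          have := hx2 i (Set.mem_univ i)
          rw [hiter] at this
          exact interior_subset (by exact this)
        have heq : g^[n₀ + k] (x i) = g^[k] (g^[n₀] (x i)) := by
          rw [add_comm, Function.iterate_add_apply]
        rw [heq]
        exact (hPinv.iterate k) hxi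
    exact Filter.mem_of_superset (hWopen.mem_nhds hzW) hWV
  · intro x hx
    have := hx 0
    simpa using this
  · intro x hx n
    have := hx (n + 1)
    rwa [Function.iterate_succ_apply] at this
end
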